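/- Let M_τ(x)=Σ_{n≥0}(e_τ(n)−o_τ(n))xⁿ where e_τ(n), o_τ(n) count even and odd permutations of length n avoiding both 132 and τ. If τ=(β,k)∈S_k(132) ends with its maximum entry k (so β∈S_{k−1}(132)), then M_τ(x) = 2(1+x·M_β(−x)) / ((1−x·M_β(x))² + (1+x·M_β(−x))²). -/

import Mathlib

/-- `π` contains the pattern `τ`: there is a strictly increasing choice of positions
on which `π` is order-isomorphic to `τ`. -/
def HasPatt {n k : ℕ} (π : Equiv.Perm (Fin n)) (τ : Equiv.Perm (Fin k)) : Prop :=
  ∃ f : Fin k → Fin n, StrictMono f ∧ ∀ i j : Fin k, τ i < τ j ↔ π (f i) < π (f j)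

/-- The pattern `132` as a permutation of `Fin 3` (0-indexed values `0, 2, 1`). -/
def patt132 : Equiv.Perm (Fin 3) := Equiv.swap 1 2

/-- The number of even (sign `+1`) permutations of length `n` avoiding both the
pattern `132` and the pattern `τ`. -/
noncomputable def EvenAvoid {k : ℕ} (τ : Equiv.Perm (Fin k)) (n : ℕ) : ℕ :=
  Nat.card {π : Equiv.Perm (Fin n) //
    Equiv.Perm.sign π = 1 ∧ ¬ HasPatt π patt132 ∧ ¬ HasPatt π τ}

/-- The number of odd (sign `−1`) permutations of length `n` avoiding both the
pattern `132` and the pattern `τ`. -/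
noncomputable def OddAvoid {k : ℕ} (τ : Equiv.Perm (Fin k)) (n : ℕ) : ℕ :=
  Nat.card {π : Equiv.Perm (Fin n) //
    Equiv.Perm.sign π = -1 ∧ ¬ HasPatt π patt132 ∧ ¬ HasPatt π τ}

open PowerSeries

/-- `M_τ(x) = Σ (e_τ(n) − o_τ(n)) xⁿ`, where `e_τ(n)` and `o_τ(n)` count even and odd
permutations of length `n` avoiding both `132` and `τ`. -/
noncomputable def MgfP {k : ℕ} (τ : Equiv.Perm (Fin k)) : PowerSeries ℚ :=
  PowerSeries.mk fun n => (EvenAvoid τ n : ℚ) - (OddAvoid τ n : ℚ)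

open Equiv Finset

open scoped Classical in
noncomputable def msumQ {k : ℕ} (σ : Equiv.Perm (Fin k)) (n : ℕ) : ℚ :=
  ∑ π : Equiv.Perm (Fin n),
    if ¬ HasPatt π patt132 ∧ ¬ HasPatt π σ then ((Equiv.Perm.sign π : ℤ) : ℚ) else 0

open scoped Classical in
lemma coeff_MgfP {k : ℕ} (σ : Equiv.Perm (Fin k)) (n : ℕ) :
    (PowerSeries.coeff (R := ℚ) n) (MgfP σ) = msumQ σ n := by
  have hE : (EvenAvoid σ n : ℚ) =
      ((Finset.univ.filter (fun π : Equiv.Perm (Fin n) =>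
        (¬ HasPatt π patt132 ∧ ¬ HasPatt π σ) ∧ Equiv.Perm.sign π = 1)).card : ℚ) := by
    rw [EvenAvoid, Nat.card_eq_fintype_card, Fintype.card_subtype]
    norm_cast
    apply congrArg Finset.card
    apply Finset.filter_congr
    intro π _
    tauto
  have hO : (OddAvoid σ n : ℚ) =
      ((Finset.univ.filter (fun π : Equiv.Perm (Fin n) =>
        (¬ HasPatt π patt132 ∧ ¬ HasPatt π σ) ∧ ¬ Equiv.Perm.sign π = 1)).card : ℚ) := by
    rw [OddAvoid, Nat.card_eq_fintype_card, Fintype.card_subtype]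
    norm_cast
    apply congrArg Finset.card
    apply Finset.filter_congr
    intro π _
    constructor
    · rintro ⟨h1, h2, h3⟩
      refine ⟨⟨h2, h3⟩, ?_⟩
      rw [h1]; decide
    · rintro ⟨⟨h2, h3⟩, h1⟩
      rcases Int.units_eq_one_or (Equiv.Perm.sign π) with h | h
      · exact absurd h h1
      · exact ⟨h, h2, h3⟩
  rw [MgfP, PowerSeries.coeff_mk, msumQ, hE, hO]
  rw [← Finset.sum_filter]
  rw [← Finset.sum_filter_add_sum_filter_not
    (Finset.univ.filter (fun π : Equiv.Perm (Fin n) => ¬ HasPatt π patt132 ∧ ¬ HasPatt π σ))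
    (fun π => Equiv.Perm.sign π = 1)]
  rw [Finset.filter_filter, Finset.filter_filter]
  have h1 : ∑ π ∈ Finset.univ.filter (fun π : Equiv.Perm (Fin n) =>
      (¬ HasPatt π patt132 ∧ ¬ HasPatt π σ) ∧ Equiv.Perm.sign π = 1),
      ((Equiv.Perm.sign π : ℤ) : ℚ)
      = ∑ _π ∈ Finset.univ.filter (fun π : Equiv.Perm (Fin n) =>
      (¬ HasPatt π patt132 ∧ ¬ HasPatt π σ) ∧ Equiv.Perm.sign π = 1), (1 : ℚ) := by
    refine Finset.sum_congr rfl (fun π hπ => ?_)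
    simp only [Finset.mem_filter] at hπ
    rw [hπ.2.2]
    norm_num
  have h2 : ∑ π ∈ Finset.univ.filter (fun π : Equiv.Perm (Fin n) =>
      (¬ HasPatt π patt132 ∧ ¬ HasPatt π σ) ∧ ¬ Equiv.Perm.sign π = 1),
      ((Equiv.Perm.sign π : ℤ) : ℚ)
      = ∑ _π ∈ Finset.univ.filter (fun π : Equiv.Perm (Fin n) =>
      (¬ HasPatt π patt132 ∧ ¬ HasPatt π σ) ∧ ¬ Equiv.Perm.sign π = 1), (-1 : ℚ) := by
    refine Finset.sum_congr rfl (fun π hπ => ?_)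
    simp only [Finset.mem_filter] at hπ
    rcases Int.units_eq_one_or (Equiv.Perm.sign π) with h | h
    · exact absurd h hπ.2.2
    · rw [h]; norm_num
  rw [h1, h2, Finset.sum_const, Finset.sum_const]
  simp
  ring

lemma hasPatt_trans {n m k : ℕ} {π : Equiv.Perm (Fin n)} {ρ : Equiv.Perm (Fin m)}
    {σ : Equiv.Perm (Fin k)} (h1 : HasPatt π ρ) (h2 : HasPatt ρ σ) : HasPatt π σ := by
  obtain ⟨f, hf, hwf⟩ := h1
  obtain ⟨g, hg, hwg⟩ := h2
  exact ⟨f ∘ g, hf.comp hg, fun i j => (hwg i j).trans (hwf (g i) (g j))⟩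

lemma finRotate_pow_apply (m c : ℕ) (x : Fin (m + 1)) :
    ((finRotate (m + 1)) ^ c) x = ⟨(x.val + c) % (m + 1), Nat.mod_lt _ (Nat.succ_pos m)⟩ := by
  induction c generalizing x with
  | zero => simp [Nat.mod_eq_of_lt x.isLt]
  | succ c ih =>
    rw [pow_succ, Equiv.Perm.mul_apply, finRotate_succ_apply, ih]
    apply Fin.ext
    show ((x + 1 : Fin (m+1)).val + c) % (m + 1) = (x.val + (c + 1)) % (m + 1)
    rw [Fin.add_def]
    rw [Fin.val_one', Nat.mod_add_mod]
    rcases Nat.eq_zero_or_pos m with hm | hm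
    · subst hm; simp [Nat.mod_one]
    · rw [Nat.mod_eq_of_lt (show 1 < m + 1 by omega)]
      congr 1
      omega

def embPQ (p q : ℕ) : (Fin p ⊕ Fin 1) ⊕ Fin q ≃ Fin (p + q + 1) :=
  ((finSumFinEquiv.sumCongr (Equiv.refl (Fin q))).trans finSumFinEquiv).trans
    (finCongr (by omega))

lemma embPQ_left (p q : ℕ) (i : Fin p) :
    embPQ p q (Sum.inl (Sum.inl i)) = ⟨i.val, by omega⟩ := by
  apply Fin.ext
  simp [embPQ]

lemma embPQ_mid (p q : ℕ) :
    embPQ p q (Sum.inl (Sum.inr 0)) = ⟨p, by omega⟩ := by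
  apply Fin.ext
  simp [embPQ]

lemma embPQ_right (p q : ℕ) (j : Fin q) :
    embPQ p q (Sum.inr j) = ⟨p + 1 + j.val, by omega⟩ := by
  apply Fin.ext
  simp [embPQ]

def glue {p q : ℕ} (L : Equiv.Perm (Fin p)) (R : Equiv.Perm (Fin q)) :
    Equiv.Perm (Fin (p + q + 1)) :=
  (finRotate (p + q + 1)) ^ q *
    (embPQ p q).permCongr ((L.sumCongr (Equiv.refl (Fin 1))).sumCongr R)

lemma glue_left {p q : ℕ} (L : Equiv.Perm (Fin p)) (R : Equiv.Perm (Fin q)) (i : Fin p) :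
    glue L R ⟨i.val, by omega⟩ = ⟨(L i).val + q, by omega⟩ := by
  have hsymm : (embPQ p q).symm ⟨i.val, by omega⟩ = Sum.inl (Sum.inl i) := by
    rw [Equiv.symm_apply_eq, embPQ_left]
  rw [glue, Equiv.Perm.mul_apply, Equiv.permCongr_apply, hsymm]
  have : ((L.sumCongr (Equiv.refl (Fin 1))).sumCongr R) (Sum.inl (Sum.inl i))
      = Sum.inl (Sum.inl (L i)) := by simp
  rw [this, embPQ_left, finRotate_pow_apply]
  apply Fin.ext
  show ((L i).val + q) % (p + q + 1) = (L i).val + q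
  exact Nat.mod_eq_of_lt (by have := (L i).isLt; omega)

lemma glue_mid {p q : ℕ} (L : Equiv.Perm (Fin p)) (R : Equiv.Perm (Fin q)) :
    glue L R ⟨p, by omega⟩ = Fin.last (p + q) := by
  have hsymm : (embPQ p q).symm ⟨p, by omega⟩ = Sum.inl (Sum.inr 0) := by
    rw [Equiv.symm_apply_eq, embPQ_mid]
  rw [glue, Equiv.Perm.mul_apply, Equiv.permCongr_apply, hsymm]
  have : ((L.sumCongr (Equiv.refl (Fin 1))).sumCongr R) (Sum.inl (Sum.inr 0))
      = Sum.inl (Sum.inr 0) := by simp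
  rw [this, embPQ_mid, finRotate_pow_apply]
  apply Fin.ext
  show (p + q) % (p + q + 1) = p + q
  exact Nat.mod_eq_of_lt (by omega)

lemma glue_right {p q : ℕ} (L : Equiv.Perm (Fin p)) (R : Equiv.Perm (Fin q)) (j : Fin q) :
    glue L R ⟨p + 1 + j.val, by omega⟩ = ⟨(R j).val, by omega⟩ := by
  have hsymm : (embPQ p q).symm ⟨p + 1 + j.val, by omega⟩ = Sum.inr j := by
    rw [Equiv.symm_apply_eq, embPQ_right]
  rw [glue, Equiv.Perm.mul_apply, Equiv.permCongr_apply, hsymm]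
  have : ((L.sumCongr (Equiv.refl (Fin 1))).sumCongr R) (Sum.inr j) = Sum.inr (R j) := by simp
  rw [this, embPQ_right, finRotate_pow_apply]
  apply Fin.ext
  show (p + 1 + (R j).val + q) % (p + q + 1) = (R j).val
  rw [Nat.mod_eq_sub_mod (by omega), Nat.mod_eq_of_lt (by have := (R j).isLt; omega)]
  omega

lemma sign_glue {p q : ℕ} (L : Equiv.Perm (Fin p)) (R : Equiv.Perm (Fin q)) :
    Equiv.Perm.sign (glue L R) = (-1) ^ ((p + q) * q) *
      (Equiv.Perm.sign L * Equiv.Perm.sign R) := by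
  rw [glue, map_mul, map_pow, sign_finRotate, Equiv.Perm.sign_permCongr,
    Equiv.Perm.sign_sumCongr, Equiv.Perm.sign_sumCongr, ← pow_mul]
  simp

lemma glue_val_lt {p q : ℕ} (L : Equiv.Perm (Fin p)) (R : Equiv.Perm (Fin q))
    (x : Fin (p + q + 1)) (hx : x.val < p) :
    (glue L R x).val = (L ⟨x.val, hx⟩).val + q := by
  have h : glue L R x = glue L R ⟨(⟨x.val, hx⟩ : Fin p).val, by omega⟩ := rfl
  rw [h, glue_left]

lemma glue_val_eq {p q : ℕ} (L : Equiv.Perm (Fin p)) (R : Equiv.Perm (Fin q))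
    (x : Fin (p + q + 1)) (hx : x.val = p) :
    (glue L R x).val = p + q := by
  have h : x = ⟨p, by omega⟩ := Fin.ext hx
  rw [h, glue_mid]
  rfl

lemma glue_val_gt {p q : ℕ} (L : Equiv.Perm (Fin p)) (R : Equiv.Perm (Fin q))
    (x : Fin (p + q + 1)) (hx : p < x.val) :
    (glue L R x).val = (R ⟨x.val - (p + 1), by omega⟩).val := by
  have h : glue L R x = glue L R ⟨p + 1 + (⟨x.val - (p + 1), by omega⟩ : Fin q).val, by omega⟩ := by
    congr 1
    apply Fin.ext
    show x.val = p + 1 + (x.val - (p + 1))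
    omega
  rw [h, glue_right]

lemma hasPatt_of_nat {m k : ℕ} (ρ : Equiv.Perm (Fin m)) (σ : Equiv.Perm (Fin k))
    (u : Fin k → ℕ) (hu : ∀ a, u a < m)
    (humono : ∀ a b : Fin k, a < b → u a < u b)
    (w : Fin k → ℕ)
    (hval : ∀ a, (ρ ⟨u a, hu a⟩ : ℕ) = w a)
    (hiff : ∀ i j, σ i < σ j ↔ w i < w j) : HasPatt ρ σ := by
  refine ⟨fun a => ⟨u a, hu a⟩, fun a b h => Fin.mk_lt_mk.mpr (humono a b h), fun i j => ?_⟩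
  rw [hiff i j]
  simp only [Fin.lt_def, hval]

lemma glue_hasPatt_left {p q : ℕ} (L : Equiv.Perm (Fin p)) (R : Equiv.Perm (Fin q)) :
    HasPatt (glue L R) L := by
  have hu : ∀ a : Fin p, (a : ℕ) < p + q + 1 := fun a => by have := a.isLt; omega
  have hval : ∀ a : Fin p, ((glue L R) ⟨(a : ℕ), hu a⟩ : ℕ) = (L a : ℕ) + q := fun a =>
    glue_val_lt L R ⟨(a : ℕ), hu a⟩ a.isLt
  have hiff : ∀ i j : Fin p, L i < L j ↔ (L i : ℕ) + q < (L j : ℕ) + q := fun i j => by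
    rw [Fin.lt_def]; omega
  exact hasPatt_of_nat _ _ _ hu (fun a b h => h) _ hval hiff

lemma glue_hasPatt_right {p q : ℕ} (L : Equiv.Perm (Fin p)) (R : Equiv.Perm (Fin q)) :
    HasPatt (glue L R) R := by
  have hu : ∀ a : Fin q, p + 1 + (a : ℕ) < p + q + 1 := fun a => by have := a.isLt; omega
  have hval : ∀ a : Fin q, ((glue L R) ⟨p + 1 + (a : ℕ), hu a⟩ : ℕ) = (R a : ℕ) := by
    intro a
    rw [glue_val_gt L R ⟨p + 1 + (a : ℕ), hu a⟩ (by show p < p + 1 + (a : ℕ); omega)]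
    congr 2
    apply Fin.ext
    show p + 1 + (a : ℕ) - (p + 1) = (a : ℕ)
    omega
  have hiff : ∀ i j : Fin q, R i < R j ↔ (R i : ℕ) < (R j : ℕ) := fun i j => Fin.lt_def
  exact hasPatt_of_nat _ _ _ hu (fun a b h => by
    have : (a : ℕ) < b := h
    show p + 1 + (a : ℕ) < p + 1 + (b : ℕ)
    omega) _ hval hiff

lemma glue_patt132_dir {p q : ℕ} (L : Equiv.Perm (Fin p)) (R : Equiv.Perm (Fin q)) :
    HasPatt (glue L R) patt132 → HasPatt L patt132 ∨ HasPatt R patt132 := by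
  rintro ⟨f, hf, hw⟩
  have h01 : (f 0 : ℕ) < f 1 := hf (by decide)
  have h12 : (f 1 : ℕ) < f 2 := hf (by decide)
  have v02 : ((glue L R) (f 0) : ℕ) < (glue L R) (f 2) := (hw 0 2).mp (by decide)
  have v21 : ((glue L R) (f 2) : ℕ) < (glue L R) (f 1) := (hw 2 1).mp (by decide)
  rcases lt_trichotomy ((f 2) : ℕ) p with h2 | h2 | h2
  · -- all in left block
    have hall : ∀ a : Fin 3, (f a : ℕ) < p := by
      intro a
      have : (f a : ℕ) ≤ (f 2 : ℕ) := hf.monotone (Fin.le_last a)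
      omega
    have hval : ∀ a : Fin 3, (L ⟨(f a : ℕ), hall a⟩ : ℕ) = ((glue L R) (f a) : ℕ) - q := by
      intro a
      have h := glue_val_lt L R (f a) (hall a)
      omega
    have hq : ∀ a : Fin 3, q ≤ ((glue L R) (f a) : ℕ) := by
      intro a
      rw [glue_val_lt L R (f a) (hall a)]
      omega
    have hiff : ∀ i j : Fin 3, patt132 i < patt132 j ↔
        ((glue L R) (f i) : ℕ) - q < ((glue L R) (f j) : ℕ) - q := by
      intro i j
      rw [hw i j, Fin.lt_def]
      have := hq i
      have := hq j
      omega
    exact Or.inl (hasPatt_of_nat _ _ _ hall (fun a b h => hf h) _ hval hiff)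
  · exfalso
    have hv2 : (glue L R (f 2) : ℕ) = p + q := glue_val_eq L R _ h2
    have := ((glue L R) (f 1)).isLt
    omega
  · -- all in right block
    have hv2 : (glue L R (f 2) : ℕ) < q := by
      rw [glue_val_gt L R _ h2]; exact (R _).isLt
    have h0 : p < (f 0 : ℕ) := by
      rcases lt_trichotomy ((f 0) : ℕ) p with h | h | h
      · exfalso; have h' := glue_val_lt L R _ h; omega
      · exfalso; have h' := glue_val_eq L R _ h; omega
      · exact h
    have hall : ∀ a : Fin 3, p < (f a : ℕ) := by
      intro a
      have : (f 0 : ℕ) ≤ (f a : ℕ) := hf.monotone (Fin.zero_le a)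
      omega
    have hu : ∀ a : Fin 3, (f a : ℕ) - (p + 1) < q := by
      intro a
      have := (f a).isLt
      have := hall a
      omega
    have hval : ∀ a : Fin 3, (R ⟨(f a : ℕ) - (p + 1), hu a⟩ : ℕ) = ((glue L R) (f a) : ℕ) :=
      fun a => (glue_val_gt L R (f a) (hall a)).symm
    have hiff : ∀ i j : Fin 3, patt132 i < patt132 j ↔
        ((glue L R) (f i) : ℕ) < ((glue L R) (f j) : ℕ) := by
      intro i j
      rw [hw i j, Fin.lt_def]
    have hum : ∀ a b : Fin 3, a < b → (f a : ℕ) - (p + 1) < (f b : ℕ) - (p + 1) := by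
      intro a b h
      have h' : (f a : ℕ) < f b := hf h
      have := hall a
      omega
    exact Or.inr (hasPatt_of_nat _ _ _ hu hum _ hval hiff)

lemma glue_patt132_iff {p q : ℕ} (L : Equiv.Perm (Fin p)) (R : Equiv.Perm (Fin q)) :
    HasPatt (glue L R) patt132 ↔ HasPatt L patt132 ∨ HasPatt R patt132 := by
  constructor
  · exact glue_patt132_dir L R
  · rintro (h | h)
    · exact hasPatt_trans (glue_hasPatt_left L R) h
    · exact hasPatt_trans (glue_hasPatt_right L R) h

section TauLemmas

variable {k : ℕ} (τ : Equiv.Perm (Fin (k + 1))) (hlast : τ (Fin.last k) = Fin.last k)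
  (β : Equiv.Perm (Fin k)) (hβ : ∀ i : Fin k, (β i : ℕ) = (τ i.castSucc : ℕ))

include hlast in
lemma tau_lt_last : ∀ i : Fin k, τ i.castSucc < τ (Fin.last k) := by
  intro i
  rw [hlast]
  refine lt_of_le_of_ne (Fin.le_last _) (fun h => ?_)
  have h2 : i.castSucc = Fin.last k := τ.injective (h.trans hlast.symm)
  exact absurd h2 (ne_of_lt (Fin.castSucc_lt_last i))

include hβ in
lemma tau_val_iff : ∀ i j : Fin k, β i < β j ↔ τ i.castSucc < τ j.castSucc := by
  intro i j
  simp only [Fin.lt_def, hβ]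

include hβ in
lemma tau_hasPatt_beta : HasPatt τ β :=
  ⟨Fin.castSucc, fun a b h => Fin.castSucc_lt_castSucc_iff.mpr h, tau_val_iff τ β hβ⟩

include hlast hβ in
lemma glue_tau_of_left {p q : ℕ} (L : Equiv.Perm (Fin p)) (R : Equiv.Perm (Fin q))
    (h : HasPatt L β) : HasPatt (glue L R) τ := by
  obtain ⟨g, hg, hwg⟩ := h
  have hu : ∀ x : Fin (k + 1),
      (Fin.lastCases (motive := fun _ => ℕ) p (fun i => ((g i : ℕ))) x) < p + q + 1 := by
    intro x
    induction x using Fin.lastCases with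
    | last => simp
    | cast i => simp [Fin.lastCases_castSucc]; have := (g i).isLt; omega
  have humono : ∀ a b : Fin (k + 1), a < b →
      (Fin.lastCases (motive := fun _ => ℕ) p (fun i => ((g i : ℕ))) a) < Fin.lastCases (motive := fun _ => ℕ) p (fun i => ((g i : ℕ))) b := by
    intro a b hab
    rcases Fin.eq_castSucc_or_eq_last b with ⟨j, rfl⟩ | rfl
    · rcases Fin.eq_castSucc_or_eq_last a with ⟨i, rfl⟩ | rfl
      · simp only [Fin.lastCases_castSucc]
        exact hg (Fin.castSucc_lt_castSucc_iff.mp hab)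
      · exact absurd (lt_trans hab (Fin.castSucc_lt_last j)) (lt_irrefl _)
    · rcases Fin.eq_castSucc_or_eq_last a with ⟨i, rfl⟩ | rfl
      · simp only [Fin.lastCases_castSucc, Fin.lastCases_last]
        exact (g i).isLt
      · exact absurd hab (lt_irrefl _)
  have hval : ∀ x : Fin (k + 1),
      ((glue L R) ⟨Fin.lastCases (motive := fun _ => ℕ) p (fun i => ((g i : ℕ))) x, hu x⟩ : ℕ)
        = Fin.lastCases (motive := fun _ => ℕ) (p + q) (fun i => ((L (g i) : ℕ)) + q) x := by
    intro x
    induction x using Fin.lastCases with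
    | last =>
      rw [glue_val_eq L R _ (by simp)]
      simp
    | cast i =>
      rw [glue_val_lt L R _ (by simp)]
      simp
  have hiff : ∀ x y : Fin (k + 1), τ x < τ y ↔
      (Fin.lastCases (motive := fun _ => ℕ) (p + q) (fun i => ((L (g i) : ℕ)) + q) x : ℕ)
        < Fin.lastCases (motive := fun _ => ℕ) (p + q) (fun i => ((L (g i) : ℕ)) + q) y := by
    intro x y
    induction x using Fin.lastCases with
    | last =>
      induction y using Fin.lastCases with
      | last => simp
      | cast j =>
        simp only [Fin.lastCases_castSucc, Fin.lastCases_last]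
        refine iff_of_false (fun h => absurd (lt_trans h (tau_lt_last τ hlast j)) (lt_irrefl _))
          (by have := (L (g j)).isLt; omega)
    | cast i =>
      induction y using Fin.lastCases with
      | last =>
        simp only [Fin.lastCases_castSucc, Fin.lastCases_last]
        refine iff_of_true (tau_lt_last τ hlast i) (by have := (L (g i)).isLt; omega)
      | cast j =>
        simp only [Fin.lastCases_castSucc]
        rw [← tau_val_iff τ β hβ i j, hwg i j, Fin.lt_def]
        omega
  exact hasPatt_of_nat _ _ _ hu humono _ hval hiff

include hlast hβ in
lemma glue_tau_dir {p q : ℕ} (L : Equiv.Perm (Fin p)) (R : Equiv.Perm (Fin q))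
    (h : HasPatt (glue L R) τ) : HasPatt L β ∨ HasPatt R τ := by
  obtain ⟨f, hf, hw⟩ := h
  have hvc : ∀ i : Fin k, ((glue L R) (f i.castSucc) : ℕ) < (glue L R) (f (Fin.last k)) :=
    fun i => (hw i.castSucc (Fin.last k)).mp (tau_lt_last τ hlast i)
  have hpc : ∀ i : Fin k, (f i.castSucc : ℕ) < f (Fin.last k) :=
    fun i => hf (Fin.castSucc_lt_last i)
  rcases lt_trichotomy ((f (Fin.last k)) : ℕ) p with hL | hL | hL
  · -- everything in the left block : L contains τ, hence contains β
    have hall : ∀ x : Fin (k + 1), (f x : ℕ) < p := by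
      intro x
      have : (f x : ℕ) ≤ (f (Fin.last k) : ℕ) := hf.monotone (Fin.le_last x)
      omega
    have hq : ∀ x : Fin (k + 1), q ≤ ((glue L R) (f x) : ℕ) := by
      intro x
      rw [glue_val_lt L R (f x) (hall x)]
      omega
    have hval : ∀ x : Fin (k + 1),
        (L ⟨(f x : ℕ), hall x⟩ : ℕ) = ((glue L R) (f x) : ℕ) - q := by
      intro x
      have h := glue_val_lt L R (f x) (hall x)
      omega
    have hiff : ∀ x y : Fin (k + 1), τ x < τ y ↔
        ((glue L R) (f x) : ℕ) - q < ((glue L R) (f y) : ℕ) - q := by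
      intro x y
      rw [hw x y, Fin.lt_def]
      have := hq x
      have := hq y
      omega
    have hLτ : HasPatt L τ := hasPatt_of_nat _ _ _ hall (fun a b h => hf h) _ hval hiff
    exact Or.inl (hasPatt_trans hLτ (tau_hasPatt_beta τ β hβ))
  · -- max of occurrence at the middle position : L contains β
    have hallc : ∀ i : Fin k, (f i.castSucc : ℕ) < p := fun i => by
      have := hpc i; omega
    have hq : ∀ i : Fin k, q ≤ ((glue L R) (f i.castSucc) : ℕ) := by
      intro i
      rw [glue_val_lt L R _ (hallc i)]
      omega
    have hval : ∀ i : Fin k,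
        (L ⟨(f i.castSucc : ℕ), hallc i⟩ : ℕ) = ((glue L R) (f i.castSucc) : ℕ) - q := by
      intro i
      have h := glue_val_lt L R (f i.castSucc) (hallc i)
      omega
    have hiff : ∀ i j : Fin k, β i < β j ↔
        ((glue L R) (f i.castSucc) : ℕ) - q < ((glue L R) (f j.castSucc) : ℕ) - q := by
      intro i j
      rw [tau_val_iff τ β hβ i j, hw i.castSucc j.castSucc, Fin.lt_def]
      have := hq i
      have := hq j
      omega
    exact Or.inl (hasPatt_of_nat _ _ _ hallc
      (fun a b h => hf (Fin.castSucc_lt_castSucc_iff.mpr h)) _ hval hiff)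
  · -- everything in the right block : R contains τ
    have hvlast : ((glue L R) (f (Fin.last k)) : ℕ) < q := by
      rw [glue_val_gt L R _ hL]; exact (R _).isLt
    have hall : ∀ x : Fin (k + 1), p < (f x : ℕ) := by
      intro x
      induction x using Fin.lastCases with
      | last => exact hL
      | cast i =>
        rcases lt_trichotomy ((f i.castSucc) : ℕ) p with h | h | h
        · exfalso
          have h' := glue_val_lt L R _ h
          have := hvc i
          omega
        · exfalso
          have h' := glue_val_eq L R _ h
          have := hvc i
          omega
        · exact h
    have hu : ∀ x : Fin (k + 1), (f x : ℕ) - (p + 1) < q := by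
      intro x
      have := (f x).isLt
      have := hall x
      omega
    have hval : ∀ x : Fin (k + 1),
        (R ⟨(f x : ℕ) - (p + 1), hu x⟩ : ℕ) = ((glue L R) (f x) : ℕ) :=
      fun x => (glue_val_gt L R (f x) (hall x)).symm
    have hiff : ∀ x y : Fin (k + 1), τ x < τ y ↔
        ((glue L R) (f x) : ℕ) < ((glue L R) (f y) : ℕ) := by
      intro x y
      rw [hw x y, Fin.lt_def]
    have hum : ∀ a b : Fin (k + 1), a < b → (f a : ℕ) - (p + 1) < (f b : ℕ) - (p + 1) := by
      intro a b h
      have h' : (f a : ℕ) < f b := hf h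
      have := hall a
      omega
    exact Or.inr (hasPatt_of_nat _ _ _ hu hum _ hval hiff)

include hlast hβ in
lemma glue_tau_iff {p q : ℕ} (L : Equiv.Perm (Fin p)) (R : Equiv.Perm (Fin q)) :
    HasPatt (glue L R) τ ↔ HasPatt L β ∨ HasPatt R τ := by
  constructor
  · exact glue_tau_dir τ hlast β hβ L R
  · rintro (h | h)
    · exact glue_tau_of_left τ hlast β hβ L R h
    · exact hasPatt_trans (glue_hasPatt_right L R) h

end TauLemmas

lemma has132_of_violation {p q : ℕ} (π : Equiv.Perm (Fin (p + q + 1)))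
    (hmid : π ⟨p, by omega⟩ = Fin.last (p + q))
    (i j : Fin (p + q + 1)) (hi : (i : ℕ) < p) (hj : p < (j : ℕ))
    (hlt : (π i : ℕ) < (π j : ℕ)) : HasPatt π patt132 := by
  have hilt : (π i : ℕ) < p + q := by
    rcases lt_or_eq_of_le (Nat.lt_succ_iff.mp (π i).isLt) with h | h
    · exact h
    · exfalso
      have : π i = Fin.last (p + q) := Fin.ext h
      have h2 : i = ⟨p, by omega⟩ := π.injective (this.trans hmid.symm)
      rw [h2] at hi
      exact absurd hi (by simp)
  have hjlt : (π j : ℕ) < p + q := by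
    rcases lt_or_eq_of_le (Nat.lt_succ_iff.mp (π j).isLt) with h | h
    · exact h
    · exfalso
      have h1 : π j = Fin.last (p + q) := Fin.ext h
      have h2 : j = ⟨p, by omega⟩ := π.injective (h1.trans hmid.symm)
      rw [h2] at hj
      exact absurd hj (by simp)
  have hib := i.isLt
  have hjb := j.isLt
  have hu : ∀ a : Fin 3, (![ (i : ℕ), p, (j : ℕ) ] a) < p + q + 1 := by
    intro a
    fin_cases a <;> simp <;> omega
  have humono : ∀ a b : Fin 3, a < b →
      (![ (i : ℕ), p, (j : ℕ) ] a) < ![ (i : ℕ), p, (j : ℕ) ] b := by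
    intro a b hab
    fin_cases a <;> fin_cases b <;>
      first
        | exact absurd hab (by decide)
        | (simp; omega)
  have hval : ∀ a : Fin 3,
      (π ⟨![ (i : ℕ), p, (j : ℕ) ] a, hu a⟩ : ℕ) = ![ (π i : ℕ), p + q, (π j : ℕ) ] a := by
    intro a
    fin_cases a
    · rfl
    · show (π ⟨p, _⟩ : ℕ) = p + q
      rw [hmid]
      rfl
    · rfl
  have hiff : ∀ a b : Fin 3, patt132 a < patt132 b ↔
      (![ (π i : ℕ), p + q, (π j : ℕ) ] a) < ![ (π i : ℕ), p + q, (π j : ℕ) ] b := by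
    intro a b
    fin_cases a <;> fin_cases b <;> simp <;>
      first
        | (exfalso; revert hlt; decide)
        | omega
        | (exact iff_of_true (by decide) (by omega))
        | (exact iff_of_false (by decide) (by omega))
  exact hasPatt_of_nat _ _ _ hu humono _ hval hiff

lemma exists_glue {p q : ℕ} (π : Equiv.Perm (Fin (p + q + 1)))
    (hmid : π ⟨p, by omega⟩ = Fin.last (p + q))
    (hblock : ∀ i j : Fin (p + q + 1), (i : ℕ) < p → p < (j : ℕ) → (π j : ℕ) < (π i : ℕ)) :
    ∃ (L : Equiv.Perm (Fin p)) (R : Equiv.Perm (Fin q)), π = glue L R := by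
  have hnl : ∀ x : Fin (p + q + 1), (x : ℕ) ≠ p → (π x : ℕ) < p + q := by
    intro x hx
    rcases lt_or_eq_of_le (Nat.lt_succ_iff.mp (π x).isLt) with h | h
    · exact h
    · exfalso
      have h1 : π x = Fin.last (p + q) := Fin.ext h
      have h2 : x = ⟨p, by omega⟩ := π.injective (h1.trans hmid.symm)
      exact hx (by rw [h2])
  have hA : ∀ x : Fin (p + q + 1), (x : ℕ) < p → q ≤ (π x : ℕ) := by
    intro x hx
    have hsub : (Finset.univ.image (fun t : Fin q => (π ⟨p + 1 + (t : ℕ), by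
        have := t.isLt; omega⟩ : ℕ))) ⊆ Finset.range ((π x : ℕ)) := by
      intro v hv
      simp only [Finset.mem_image, Finset.mem_univ, true_and] at hv
      obtain ⟨t, rfl⟩ := hv
      exact Finset.mem_range.mpr (hblock x ⟨p + 1 + (t : ℕ), by have := t.isLt; omega⟩ hx
        (by show p < p + 1 + (t : ℕ); omega))
    have hinj : Function.Injective (fun t : Fin q => (π ⟨p + 1 + (t : ℕ), by
        have := t.isLt; omega⟩ : ℕ)) := by
      intro a b hab
      simp only at hab
      have h1 := π.injective (Fin.ext hab)
      have h2 : p + 1 + (a : ℕ) = p + 1 + (b : ℕ) := by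
        have := congrArg Fin.val h1
        simpa using this
      exact Fin.ext (by omega)
    have hcard := Finset.card_le_card hsub
    rw [Finset.card_image_of_injective _ hinj, Finset.card_range] at hcard
    simpa using hcard
  have hB : ∀ x : Fin (p + q + 1), p < (x : ℕ) → (π x : ℕ) < q := by
    intro x hx
    have hsub : (Finset.univ.image (fun t : Fin (p + 1) => (π ⟨(t : ℕ), by
        have := t.isLt; omega⟩ : ℕ))) ⊆ Finset.Ioo ((π x : ℕ)) (p + q + 1) := by
      intro v hv
      simp only [Finset.mem_image, Finset.mem_univ, true_and] at hv
      obtain ⟨t, rfl⟩ := hv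
      rw [Finset.mem_Ioo]
      refine ⟨?_, (π _).isLt⟩
      rcases lt_or_eq_of_le (Nat.lt_succ_iff.mp t.isLt) with h | h
      · exact hblock ⟨(t : ℕ), by omega⟩ x h hx
      · have : (⟨(t : ℕ), by have := t.isLt; omega⟩ : Fin (p + q + 1)) = ⟨p, by omega⟩ :=
          Fin.ext h
        rw [this, hmid]
        have := hnl x (by omega)
        simp only [Fin.val_last]
        omega
    have hinj : Function.Injective (fun t : Fin (p + 1) => (π ⟨(t : ℕ), by
        have := t.isLt; omega⟩ : ℕ)) := by
      intro a b hab
      simp only at hab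
      have h1 := π.injective (Fin.ext hab)
      have h2 : (a : ℕ) = (b : ℕ) := by
        have := congrArg Fin.val h1
        simpa using this
      exact Fin.ext h2
    have hcard := Finset.card_le_card hsub
    rw [Finset.card_image_of_injective _ hinj, Nat.card_Ioo] at hcard
    simp only [Finset.card_univ, Fintype.card_fin] at hcard
    omega
  -- build L and R
  have hLb : ∀ i : Fin p, (π ⟨(i : ℕ), by have := i.isLt; omega⟩ : ℕ) - q < p := by
    intro i
    have h1 := hnl ⟨(i : ℕ), by have := i.isLt; omega⟩ (by simp; omega)
    have h2 := hA ⟨(i : ℕ), by have := i.isLt; omega⟩ (by simpa using i.isLt)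
    omega
  have hLinj : Function.Injective (fun i : Fin p =>
      (⟨(π ⟨(i : ℕ), by have := i.isLt; omega⟩ : ℕ) - q, hLb i⟩ : Fin p)) := by
    intro a b hab
    simp only [Fin.mk.injEq] at hab
    have h2a := hA ⟨(a : ℕ), by have := a.isLt; omega⟩ (by simpa using a.isLt)
    have h2b := hA ⟨(b : ℕ), by have := b.isLt; omega⟩ (by simpa using b.isLt)
    have h1 : π ⟨(a : ℕ), by have := a.isLt; omega⟩ = π ⟨(b : ℕ), by have := b.isLt; omega⟩ :=
      Fin.ext (by omega)
    have := congrArg Fin.val (π.injective h1)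
    exact Fin.ext (by simpa using this)
  have hRinj : Function.Injective (fun j : Fin q =>
      (⟨(π ⟨p + 1 + (j : ℕ), by have := j.isLt; omega⟩ : ℕ),
        hB _ (by show p < p + 1 + (j : ℕ); omega)⟩ : Fin q)) := by
    intro a b hab
    simp only [Fin.mk.injEq] at hab
    have h1 : π ⟨p + 1 + (a : ℕ), by have := a.isLt; omega⟩
        = π ⟨p + 1 + (b : ℕ), by have := b.isLt; omega⟩ := Fin.ext hab
    have := congrArg Fin.val (π.injective h1)
    simp only at this
    exact Fin.ext (by omega)
  refine ⟨Equiv.ofBijective _ (Finite.injective_iff_bijective.mp hLinj),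
    Equiv.ofBijective _ (Finite.injective_iff_bijective.mp hRinj), ?_⟩
  apply Equiv.ext
  intro x
  apply Fin.ext
  rcases lt_trichotomy ((x : ℕ)) p with hx | hx | hx
  · rw [glue_val_lt _ _ x hx]
    have : ((Equiv.ofBijective _ (Finite.injective_iff_bijective.mp hLinj)) ⟨(x : ℕ), hx⟩ : ℕ)
        = (π ⟨(x : ℕ), by have := x.isLt; omega⟩ : ℕ) - q := rfl
    rw [this]
    have h2 := hA ⟨(x : ℕ), by have := x.isLt; omega⟩ (by simpa using hx)
    have h3 : π ⟨(x : ℕ), by have := x.isLt; omega⟩ = π x := rfl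
    rw [h3] at h2 ⊢
    omega
  · rw [glue_val_eq _ _ x hx]
    have h3 : π x = π ⟨p, by omega⟩ := by congr 1; exact Fin.ext hx
    rw [h3, hmid]
    rfl
  · rw [glue_val_gt _ _ x hx]
    have : ((Equiv.ofBijective _ (Finite.injective_iff_bijective.mp hRinj))
        ⟨(x : ℕ) - (p + 1), by have := x.isLt; omega⟩ : ℕ)
        = (π ⟨p + 1 + ((x : ℕ) - (p + 1)), by have := x.isLt; omega⟩ : ℕ) := rfl
    rw [this]
    have h3 : π ⟨p + 1 + ((x : ℕ) - (p + 1)), by have := x.isLt; omega⟩ = π x := by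
      congr 1
      exact Fin.ext (by show p + 1 + ((x : ℕ) - (p + 1)) = (x : ℕ); omega)
    rw [h3]

lemma glue_injective {p q : ℕ} : Function.Injective
    (fun LR : Equiv.Perm (Fin p) × Equiv.Perm (Fin q) => glue LR.1 LR.2) := by
  intro ⟨L, R⟩ ⟨L', R'⟩ h
  simp only at h
  have hL : L = L' := by
    apply Equiv.ext
    intro i
    apply Fin.ext
    have hxlt : (i : ℕ) < p + q + 1 := by have := i.isLt; omega
    have h1 := glue_val_lt L R ⟨(i : ℕ), hxlt⟩ i.isLt
    have h2 := glue_val_lt L' R' ⟨(i : ℕ), hxlt⟩ i.isLt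
    rw [h] at h1
    have h3 := h1.symm.trans h2
    have e1 : L' ⟨(i : ℕ), i.isLt⟩ = L' i := rfl
    have e2 : L ⟨(i : ℕ), i.isLt⟩ = L i := rfl
    rw [e1, e2] at h3
    omega
  have hR : R = R' := by
    apply Equiv.ext
    intro j
    apply Fin.ext
    have hxlt : p + 1 + (j : ℕ) < p + q + 1 := by have := j.isLt; omega
    have hx : p < ((⟨p + 1 + (j : ℕ), hxlt⟩ : Fin (p + q + 1)) : ℕ) := by
      show p < p + 1 + (j : ℕ); omega
    have h1 := glue_val_gt L R ⟨p + 1 + (j : ℕ), hxlt⟩ hx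
    have h2 := glue_val_gt L' R' ⟨p + 1 + (j : ℕ), hxlt⟩ hx
    rw [h] at h1
    have h3 := h1.symm.trans h2
    have e0 : ∀ (S : Equiv.Perm (Fin q)),
        S ⟨((⟨p + 1 + (j : ℕ), hxlt⟩ : Fin (p + q + 1)) : ℕ) - (p + 1), by
          show p + 1 + (j : ℕ) - (p + 1) < q; have := j.isLt; omega⟩ = S j := by
      intro S
      congr 1
      apply Fin.ext
      show p + 1 + (j : ℕ) - (p + 1) = (j : ℕ)
      omega
    rw [e0 R, e0 R'] at h3
    exact h3
  rw [hL, hR]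

lemma hasPatt_finCongr {a b k : ℕ} (h : a = b) (π : Equiv.Perm (Fin a))
    (σ : Equiv.Perm (Fin k)) :
    HasPatt ((finCongr h).permCongr π) σ ↔ HasPatt π σ := by
  subst h
  simp [finCongr_refl, Equiv.Perm.refl_mul, Equiv.Perm.refl_inv]

lemma msumQ_zero {k : ℕ} (σ : Equiv.Perm (Fin (k + 1))) : msumQ σ 0 = 1 := by
  classical
  haveI : Subsingleton (Equiv.Perm (Fin 0)) := ⟨fun a b => Equiv.ext (fun x => x.elim0)⟩
  rw [msumQ]
  rw [Fintype.sum_subsingleton _ 1]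
  rw [if_pos]
  · simp
  constructor
  · rintro ⟨f, -, -⟩
    exact (f 0).elim0
  · rintro ⟨f, -, -⟩
    exact (f 0).elim0

open scoped Classical in
lemma sum_fixed_max {k : ℕ} (τ : Equiv.Perm (Fin (k + 1)))
    (hlast : τ (Fin.last k) = Fin.last k) (β : Equiv.Perm (Fin k))
    (hβ : ∀ i : Fin k, (β i : ℕ) = (τ i.castSucc : ℕ)) (p q : ℕ) :
    ∑ π : Equiv.Perm (Fin (p + q + 1)),
      (if π ⟨p, by omega⟩ = Fin.last (p + q) then
        (if ¬ HasPatt π patt132 ∧ ¬ HasPatt π τ then ((Equiv.Perm.sign π : ℤ) : ℚ) else 0)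
       else 0)
    = (-1) ^ ((p + q) * q) * msumQ β p * msumQ τ q := by
  have key : ∑ LR : Equiv.Perm (Fin p) × Equiv.Perm (Fin q),
      (if (glue LR.1 LR.2) ⟨p, by omega⟩ = Fin.last (p + q) then
        (if ¬ HasPatt (glue LR.1 LR.2) patt132 ∧ ¬ HasPatt (glue LR.1 LR.2) τ then
          ((Equiv.Perm.sign (glue LR.1 LR.2) : ℤ) : ℚ) else 0)
       else 0)
      = ∑ π : Equiv.Perm (Fin (p + q + 1)),
      (if π ⟨p, by omega⟩ = Fin.last (p + q) then
        (if ¬ HasPatt π patt132 ∧ ¬ HasPatt π τ then ((Equiv.Perm.sign π : ℤ) : ℚ) else 0)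
       else 0) := by
    apply Finset.sum_of_injOn (fun LR => glue LR.1 LR.2)
    · exact fun a _ b _ hab => glue_injective hab
    · intro LR _
      exact Finset.mem_coe.mpr (Finset.mem_univ _)
    · intro π _ hπ
      by_cases hm : π ⟨p, by omega⟩ = Fin.last (p + q)
      · rw [if_pos hm]
        by_cases hav : HasPatt π patt132
        · rw [if_neg (by tauto)]
        · exfalso
          have hblock : ∀ i j : Fin (p + q + 1), (i : ℕ) < p → p < (j : ℕ) →
              (π j : ℕ) < (π i : ℕ) := by
            intro i j hi hj
            rcases lt_trichotomy ((π j : ℕ)) ((π i : ℕ)) with h | h | h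
            · exact h
            · exfalso
              have : j = i := π.injective (Fin.ext h)
              rw [this] at hj
              omega
            · exact absurd (has132_of_violation π hm i j hi hj h) hav
          obtain ⟨L, R, rfl⟩ := exists_glue π hm hblock
          exact hπ ⟨(L, R), Finset.mem_coe.mpr (Finset.mem_univ _), rfl⟩
      · rw [if_neg hm]
    · intro LR _
      rfl
  rw [← key]
  have point : ∀ LR : Equiv.Perm (Fin p) × Equiv.Perm (Fin q),
      (if (glue LR.1 LR.2) ⟨p, by omega⟩ = Fin.last (p + q) then
        (if ¬ HasPatt (glue LR.1 LR.2) patt132 ∧ ¬ HasPatt (glue LR.1 LR.2) τ then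
          ((Equiv.Perm.sign (glue LR.1 LR.2) : ℤ) : ℚ) else 0)
       else 0)
      = (-1) ^ ((p + q) * q) *
        ((if ¬ HasPatt LR.1 patt132 ∧ ¬ HasPatt LR.1 β then
            ((Equiv.Perm.sign LR.1 : ℤ) : ℚ) else 0) *
         (if ¬ HasPatt LR.2 patt132 ∧ ¬ HasPatt LR.2 τ then
            ((Equiv.Perm.sign LR.2 : ℤ) : ℚ) else 0)) := by
    rintro ⟨L, R⟩
    rw [if_pos (glue_mid L R)]
    by_cases hc : (¬ HasPatt L patt132 ∧ ¬ HasPatt L β) ∧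
        (¬ HasPatt R patt132 ∧ ¬ HasPatt R τ)
    · rw [if_pos, if_pos hc.1, if_pos hc.2]
      · have hs := sign_glue L R
        have : ((Equiv.Perm.sign (glue L R) : ℤ) : ℚ)
            = (((((-1) ^ ((p + q) * q) * (Equiv.Perm.sign L * Equiv.Perm.sign R)) : ℤˣ) : ℤ) : ℚ) := by
          rw [hs]
        rw [this]
        push_cast
        ring
      · constructor
        · rw [glue_patt132_iff]
          push_neg
          exact ⟨hc.1.1, hc.2.1⟩
        · rw [glue_tau_iff τ hlast β hβ]
          push_neg
          exact ⟨hc.1.2, hc.2.2⟩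
    · rw [if_neg, ]
      · rcases not_and_or.mp hc with h | h
        · rw [if_neg h]
          ring
        · rw [if_neg h]
          ring
      · rw [glue_patt132_iff, glue_tau_iff τ hlast β hβ]
        push_neg
        tauto
  rw [Finset.sum_congr rfl (fun LR _ => point LR), Fintype.sum_prod_type]
  rw [msumQ, msumQ, mul_assoc, Finset.sum_mul_sum, Finset.mul_sum]
  refine Finset.sum_congr rfl fun L _ => ?_
  rw [Finset.mul_sum]

open scoped Classical in
lemma msumQ_succ {k : ℕ} (τ : Equiv.Perm (Fin (k + 1)))
    (hlast : τ (Fin.last k) = Fin.last k) (β : Equiv.Perm (Fin k))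
    (hβ : ∀ i : Fin k, (β i : ℕ) = (τ i.castSucc : ℕ)) (m : ℕ) :
    msumQ τ (m + 1) = ∑ j ∈ Finset.range (m + 1),
      (-1) ^ (m * (m - j)) * msumQ β j * msumQ τ (m - j) := by
  have step1 : msumQ τ (m + 1) = ∑ x : Fin (m + 1), ∑ π : Equiv.Perm (Fin (m + 1)),
      (if π x = Fin.last m then
        (if ¬ HasPatt π patt132 ∧ ¬ HasPatt π τ then ((Equiv.Perm.sign π : ℤ) : ℚ) else 0)
       else 0) := by
    rw [msumQ, Finset.sum_comm]
    apply Finset.sum_congr rfl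
    intro π _
    have hcond : ∀ x : Fin (m + 1), (π x = Fin.last m) ↔ (x = π.symm (Fin.last m)) := by
      intro x
      constructor
      · intro h; rw [← h]; simp
      · intro h; rw [h]; simp
    rw [Finset.sum_congr rfl (fun x _ => by rw [if_congr (hcond x) rfl rfl])]
    rw [Finset.sum_ite_eq' Finset.univ (π.symm (Fin.last m))]
    rw [if_pos (Finset.mem_univ _)]
  rw [step1, ← Fin.sum_univ_eq_sum_range (fun j =>
    (-1 : ℚ) ^ (m * (m - j)) * msumQ β j * msumQ τ (m - j)) (m + 1)]
  apply Finset.sum_congr rfl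
  intro x _
  obtain ⟨j, hjlt, rfl⟩ : ∃ (j : ℕ) (h : j < m + 1), x = ⟨j, h⟩ := ⟨x, x.isLt, rfl⟩
  obtain ⟨q, rfl⟩ : ∃ q, m = j + q := ⟨m - j, by omega⟩
  show _ = (-1 : ℚ) ^ ((j + q) * ((j + q) - j)) * msumQ β j * msumQ τ ((j + q) - j)
  have e : j + q - j = q := by omega
  rw [e]
  exact sum_fixed_max τ hlast β hβ j q

lemma neg_one_pow_identity (i j : ℕ) :
    2 * (-1 : ℚ) ^ ((i + j) * j) + (-1) ^ i - 1 - (-1) ^ j - (-1) ^ i * (-1) ^ j = 0 := by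
  rcases Nat.even_or_odd i with hi | hi <;> rcases Nat.even_or_odd j with hj | hj
  · rw [hi.neg_one_pow, hj.neg_one_pow, (hj.mul_left (i + j)).neg_one_pow]
    norm_num
  · rw [hi.neg_one_pow, hj.neg_one_pow, (Odd.mul (hi.add_odd hj) hj).neg_one_pow]
    norm_num
  · rw [hi.neg_one_pow, hj.neg_one_pow, (hj.mul_left (i + j)).neg_one_pow]
    norm_num
  · rw [hi.neg_one_pow, hj.neg_one_pow,
      (Even.mul_right (hi.add_odd hj) j).neg_one_pow]
    norm_num

/-- If `τ ∈ S_{k+1}(132)` ends with its maximum entry and `β ∈ S_k` is `τ` with its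
last entry removed, then
`M_τ(x) = 2(1 + x·M_β(−x)) / ((1 − x·M_β(x))² + (1 + x·M_β(−x))²)`. -/
theorem Mgf_pattern_ending_in_max (k : ℕ) (τ : Equiv.Perm (Fin (k + 1)))
    (hτ132 : ¬ HasPatt τ patt132)
    (hlast : τ (Fin.last k) = Fin.last k)
    (β : Equiv.Perm (Fin k))
    (hβ : ∀ i : Fin k, (β i : ℕ) = (τ i.castSucc : ℕ)) :
    MgfP τ =
      2 * (1 + PowerSeries.X * PowerSeries.rescale (-1) (MgfP β)) *
        ((1 - PowerSeries.X * MgfP β) ^ 2 +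
          (1 + PowerSeries.X * PowerSeries.rescale (-1) (MgfP β)) ^ 2)⁻¹ := by
  set A := MgfP β with hA
  set B := MgfP τ with hB
  have hB0 : (PowerSeries.constantCoeff (R := ℚ)) B = 1 := by
    rw [← PowerSeries.coeff_zero_eq_constantCoeff, hB, coeff_MgfP, msumQ_zero]
  have hrec : ∀ m : ℕ, (PowerSeries.coeff (R := ℚ) (m + 1)) B
      = ∑ i ∈ Finset.range (m + 1),
        (-1) ^ (m * (m - i)) * (PowerSeries.coeff (R := ℚ) i) A * (PowerSeries.coeff (R := ℚ) (m - i)) B := by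
    intro m
    rw [hB, coeff_MgfP, msumQ_succ τ hlast β hβ m]
    exact Finset.sum_congr rfl fun i _ => by rw [hA, coeff_MgfP, coeff_MgfP]
  have hc2 : ∀ n : ℕ, (PowerSeries.coeff (R := ℚ) n) (2 : PowerSeries ℚ)
      = if n = 0 then 2 else 0 := by
    intro n
    rw [show (2 : PowerSeries ℚ) = PowerSeries.C (R := ℚ) 2 from (map_ofNat (PowerSeries.C (R := ℚ)) 2).symm, PowerSeries.coeff_C]
  have Ecoeff : 2 * B + PowerSeries.X * ((PowerSeries.rescale (-1) A) * B)
      - PowerSeries.X * (A * B)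
      = 2 + PowerSeries.X * (A * (PowerSeries.rescale (-1) B))
        + PowerSeries.X * ((PowerSeries.rescale (-1) A) * (PowerSeries.rescale (-1) B)) := by
    ext n
    rw [map_sub, map_add, map_add, map_add]
    cases n with
    | zero =>
      rw [PowerSeries.coeff_zero_eq_constantCoeff] at *
      simp [hB0]
    | succ m =>
      rw [PowerSeries.coeff_succ_X_mul, PowerSeries.coeff_succ_X_mul,
        PowerSeries.coeff_succ_X_mul, PowerSeries.coeff_succ_X_mul, hc2]
      rw [show (2 : PowerSeries ℚ) = PowerSeries.C (R := ℚ) 2 from (map_ofNat (PowerSeries.C (R := ℚ)) 2).symm,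
        PowerSeries.coeff_C_mul]
      rw [PowerSeries.coeff_mul, PowerSeries.coeff_mul, PowerSeries.coeff_mul,
        PowerSeries.coeff_mul]
      rw [Finset.Nat.sum_antidiagonal_eq_sum_range_succ_mk,
        Finset.Nat.sum_antidiagonal_eq_sum_range_succ_mk,
        Finset.Nat.sum_antidiagonal_eq_sum_range_succ_mk,
        Finset.Nat.sum_antidiagonal_eq_sum_range_succ_mk]
      rw [hrec m, if_neg (by omega), Finset.mul_sum, zero_add,
        ← Finset.sum_add_distrib, ← Finset.sum_sub_distrib, ← Finset.sum_add_distrib]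
      apply Finset.sum_congr rfl
      intro i hi
      dsimp only
      rw [Finset.mem_range] at hi
      have him : i + (m - i) = m := by omega
      have key := neg_one_pow_identity i (m - i)
      rw [him] at key
      simp only [PowerSeries.coeff_rescale]
      linear_combination ((PowerSeries.coeff (R := ℚ) i) A * (PowerSeries.coeff (R := ℚ) (m - i)) B) * key
  have hres : ∀ f : PowerSeries ℚ,
      PowerSeries.rescale (-1 : ℚ) (PowerSeries.rescale (-1 : ℚ) f) = f := by
    intro f
    rw [PowerSeries.rescale_rescale]
    norm_num [PowerSeries.rescale_one]
  have E1 : B * ((1 - PowerSeries.X * A) + (1 + PowerSeries.X * PowerSeries.rescale (-1) A))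
      = 2 + ((1 + PowerSeries.X * PowerSeries.rescale (-1) A)
          - (1 - PowerSeries.X * A)) * PowerSeries.rescale (-1) B := by
    linear_combination Ecoeff
  have h := congrArg (PowerSeries.rescale (-1 : ℚ)) E1
  simp only [map_mul, map_add, map_sub, map_one, map_ofNat, PowerSeries.rescale_neg_one_X, hres] at h
  have E2 : (PowerSeries.rescale (-1) B)
        * ((1 - PowerSeries.X * A) + (1 + PowerSeries.X * PowerSeries.rescale (-1) A))
      = 2 + ((1 - PowerSeries.X * A)
          - (1 + PowerSeries.X * PowerSeries.rescale (-1) A)) * B := by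
    linear_combination h
  have h2 : (2 : PowerSeries ℚ) * (B * ((1 - PowerSeries.X * A) ^ 2
        + (1 + PowerSeries.X * PowerSeries.rescale (-1) A) ^ 2))
      = 2 * (2 * (1 + PowerSeries.X * PowerSeries.rescale (-1) A)) := by
    linear_combination ((1 - PowerSeries.X * A)
        + (1 + PowerSeries.X * PowerSeries.rescale (-1) A)) * E1
      + ((1 + PowerSeries.X * PowerSeries.rescale (-1) A) - (1 - PowerSeries.X * A)) * E2
  have htwo : (2 : PowerSeries ℚ) ≠ 0 := by
    intro h'
    have := congrArg (PowerSeries.constantCoeff (R := ℚ)) h'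
    rw [map_ofNat, map_zero] at this
    norm_num at this
  have hBD : B * ((1 - PowerSeries.X * A) ^ 2
        + (1 + PowerSeries.X * PowerSeries.rescale (-1) A) ^ 2)
      = 2 * (1 + PowerSeries.X * PowerSeries.rescale (-1) A) := mul_left_cancel₀ htwo h2
  have hDne : (PowerSeries.constantCoeff (R := ℚ)) ((1 - PowerSeries.X * A) ^ 2
      + (1 + PowerSeries.X * PowerSeries.rescale (-1) A) ^ 2) ≠ 0 := by
    simp [PowerSeries.constantCoeff_X]
  calc B = B * (((1 - PowerSeries.X * A) ^ 2
            + (1 + PowerSeries.X * PowerSeries.rescale (-1) A) ^ 2)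
          * ((1 - PowerSeries.X * A) ^ 2
            + (1 + PowerSeries.X * PowerSeries.rescale (-1) A) ^ 2)⁻¹) := by
        rw [PowerSeries.mul_inv_cancel _ hDne, mul_one]
    _ = (B * ((1 - PowerSeries.X * A) ^ 2
            + (1 + PowerSeries.X * PowerSeries.rescale (-1) A) ^ 2))
          * ((1 - PowerSeries.X * A) ^ 2
            + (1 + PowerSeries.X * PowerSeries.rescale (-1) A) ^ 2)⁻¹ := by ring
    _ = (2 * (1 + PowerSeries.X * PowerSeries.rescale (-1) A))
          * ((1 - PowerSeries.X * A) ^ 2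
            + (1 + PowerSeries.X * PowerSeries.rescale (-1) A) ^ 2)⁻¹ := by rw [hBD]
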